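/- In a simply-laced triangle-free Coxeter system, two braid equivalent links α and β of rank r ≥ 1 are equal if and only if they agree in all even positions, i.e., α_{⟦2i⟧} = β_{⟦2i⟧} for all 1 ≤ i ≤ r. In particular, a link is uniquely determined within its braid class by the generators appearing in its even positions. -/

import Mathlib

open List

namespace BraidFormal

variable {B : Type*}

/-- A single braid move: replace a factor `s t s` with `t s t` where `m(s,t) = 3`. -/
def IsBraidMove (M : CoxeterMatrix B) (w w' : List B) : Prop :=
  ∃ (u v : List B) (s t : B), M s t = 3 ∧
    w = u ++ [s, t, s] ++ v ∧ w' = u ++ [t, s, t] ++ v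

/-- Braid equivalence: the reflexive-transitive closure of braid moves. -/
def BraidEquiv (M : CoxeterMatrix B) : List B → List B → Prop :=
  Relation.ReflTransGen (IsBraidMove M)

/-- The braid class of a word. -/
def BraidClass (M : CoxeterMatrix B) (α : List B) : Set (List B) :=
  {β | BraidEquiv M α β}

/-- `w` has a braid shadow at (0-based) positions `i, i+1, i+2`:
the letters there are `s, t, s` with `m(s,t) = 3`.
(This corresponds to the 1-based interval `⟦i+1, i+3⟧` of the paper.) -/
def HasShadowAt (M : CoxeterMatrix B) (w : List B) (i : ℕ) : Prop :=
  ∃ s t : B, M s t = 3 ∧ w[i]? = some s ∧ w[i+1]? = some t ∧ w[i+2]? = some s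

/-- The braid class of `α` has a braid shadow at position `i`. -/
def ClassHasShadowAt (M : CoxeterMatrix B) (α : List B) (i : ℕ) : Prop :=
  ∃ β ∈ BraidClass M α, HasShadowAt M β i

/-- The rank of a reduced expression: the number of braid shadows of its braid class. -/
noncomputable def rank (M : CoxeterMatrix B) (α : List B) : ℕ :=
  Set.ncard {i | ClassHasShadowAt M α i}

/-- A Coxeter matrix is simply laced if all entries are at most 3. -/
def SimplyLaced (M : CoxeterMatrix B) : Prop := ∀ s t : B, M s t ≤ 3

/-- A Coxeter matrix is triangle free if its Coxeter graph has no three-cycles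
(all of whose edges are labelled 3). -/
def TriangleFree (M : CoxeterMatrix B) : Prop :=
  ∀ s t u : B, s ≠ t → t ≠ u → s ≠ u → M s t = 3 → M t u = 3 → M s u ≠ 3

/-- The set of generators appearing in (0-based) position `k` of some word in the
braid class of `α`. -/
def classSupp (M : CoxeterMatrix B) (α : List B) (k : ℕ) : Set B :=
  {s | ∃ β ∈ BraidClass M α, β[k]? = some s}

/-- The set of generators appearing in (0-based) positions `i` through `j` of `w`. -/
def suppInterval (w : List B) (i j : ℕ) : Set B :=
  {s | ∃ k, i ≤ k ∧ k ≤ j ∧ w[k]? = some s}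

variable {W : Type*} [Group W] {M : CoxeterMatrix B}

/-- `α` is a link of rank `r`: a reduced expression of length `2r+1` whose braid class
has braid shadows exactly at the (0-based) positions `0, 2, 4, …, 2r-2`
(the 1-based intervals `⟦1,3⟧, ⟦3,5⟧, …, ⟦2r-1,2r+1⟧`). -/
def IsLink (cs : CoxeterSystem M W) (α : List B) (r : ℕ) : Prop :=
  cs.IsReduced α ∧ α.length = 2 * r + 1 ∧
    ∀ i : ℕ, ClassHasShadowAt M α i ↔ ∃ j < r, i = 2 * j

/-- A Fibonacci link: a link all of whose braid-class braid shadows are braid shadows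
of the link itself. -/
def IsFibLink (cs : CoxeterSystem M W) (φ : List B) (r : ℕ) : Prop :=
  IsLink cs φ r ∧ ∀ i : ℕ, ClassHasShadowAt M φ i → HasShadowAt M φ i

/-!
Every braid shadow in the class of a link starts at an even position, so the class is connected
by braid moves `s t s ↦ t s t` starting at even positions. Such a move swaps the first two letters
or fixes both, so the first letter is determined by the second. To see that the rest of the word
is then determined up to such moves, note that between a move at the front, `s t s v ↦ t s t v`,
and the next one, `t s t v' ↦ s t s v'`, the word behind the first two letters goes from `t v` to
`t v'`; by induction on the length, `s v` and `s v'` are then equivalent as well. Recursing along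
the word, the letters in even positions are determined by those in odd positions.
-/

theorem ne_of_coxeterMatrix_eq_three {s t : B} (h : M s t = 3) : s ≠ t := by
  rintro rfl
  simp at h

section EvenBraidMoves

variable (M)

inductive EvenBraidMove : List B → List B → Prop
  | head {s t : B} (v : List B) : M s t = 3 → EvenBraidMove (s :: t :: s :: v) (t :: s :: t :: v)
  | cons₂ (x y : B) {w w' : List B} :
      EvenBraidMove w w' → EvenBraidMove (x :: y :: w) (x :: y :: w')

def EvenBraidEquiv : List B → List B → Prop :=
  Relation.ReflTransGen (EvenBraidMove M)

variable {M}

theorem EvenBraidMove.of_even_length {s t : B} (hst : M s t = 3) (v : List B) :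
    ∀ {u : List B}, Even u.length → EvenBraidMove M (u ++ [s, t, s] ++ v) (u ++ [t, s, t] ++ v)
  | [], _ => head v hst
  | [_], hu => absurd hu (by simp)
  | x :: y :: _, hu => cons₂ x y (of_even_length hst v (by simpa [Nat.even_add_one] using hu))

theorem EvenBraidMove.length_eq {w w' : List B} (h : EvenBraidMove M w w') :
    w'.length = w.length := by
  induction h <;> simp [*]

namespace EvenBraidEquiv

variable {w w' σ σ' : List B}

theorem length_eq (h : EvenBraidEquiv M w w') : w'.length = w.length := by
  induction h with
  | refl => rfl
  | tail _ hmove ih => rw [hmove.length_eq, ih]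

theorem cons₂ (x y : B) (h : EvenBraidEquiv M w w') :
    EvenBraidEquiv M (x :: y :: w) (x :: y :: w') :=
  h.lift (fun l => x :: y :: l) fun _ _ => EvenBraidMove.cons₂ x y

theorem eq_of_length_le_one (h : EvenBraidEquiv M w w') (hw : w.length ≤ 1) : w' = w := by
  induction h with
  | refl => rfl
  | tail _ hmove ih =>
    subst ih
    cases hmove <;> simp at hw

theorem exists_eq_cons_cons_or_swap {x y : B} (h : EvenBraidEquiv M (x :: y :: σ) w) :
    ∃ τ, w = x :: y :: τ ∨ w = y :: x :: τ := by
  induction h with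
  | refl => exact ⟨σ, Or.inl rfl⟩
  | tail _ hmove ih =>
    obtain ⟨τ, rfl | rfl⟩ := ih <;> cases hmove <;> simp

theorem fst_eq_iff_snd_eq {x y x' y' : B} (h : EvenBraidEquiv M (x :: y :: σ) (x' :: y' :: σ')) :
    x' = x ↔ y' = y := by
  obtain ⟨τ, hτ | hτ⟩ := h.exists_eq_cons_cons_or_swap <;>
    simp only [List.cons.injEq] at hτ <;> grind

theorem exists_of_cons_cons_of_transfer {x y : B}
    (htransfer : ∀ {v v' : List B}, v.length < σ.length →
      EvenBraidEquiv M (y :: v) (y :: v') → EvenBraidEquiv M (x :: v) (x :: v'))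
    (h : EvenBraidEquiv M (x :: y :: σ) w) :
    (∃ τ, w = x :: y :: τ ∧ EvenBraidEquiv M σ τ) ∨
      -- a move at the front turned `x y x v` into `y x y v`, and moves behind `y x` followed
      (∃ τ v, w = y :: x :: τ ∧ M x y = 3 ∧
        EvenBraidEquiv M σ (x :: v) ∧ EvenBraidEquiv M (y :: v) τ) := by
  induction h with
  | refl => exact Or.inl ⟨σ, rfl, .refl⟩
  | tail _ hmove ih =>
    rcases ih with ⟨τ, rfl, hστ⟩ | ⟨τ, v, rfl, hxy, hσ, hτ⟩
    · cases hmove with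
      | head v hxy => exact Or.inr ⟨y :: v, v, rfl, hxy, hστ, .refl⟩
      | cons₂ _ _ hτ' => exact Or.inl ⟨_, rfl, hστ.tail hτ'⟩
    · cases hmove with
      | head v' _ =>
        have hv : v.length < σ.length := by
          have := hσ.length_eq
          simp only [List.length_cons] at this
          omega
        exact Or.inl ⟨_, rfl, hσ.trans (htransfer hv hτ)⟩
      | cons₂ _ _ hτ' => exact Or.inr ⟨_, v, rfl, hxy, hσ, hτ.tail hτ'⟩

theorem of_cons_cons {x y : B} {σ σ' : List B}
    (h : EvenBraidEquiv M (x :: y :: σ) (x :: y :: σ')) : EvenBraidEquiv M σ σ' := by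
  have htransfer {v v' : List B} (hv : v.length < σ.length)
      (hyv : EvenBraidEquiv M (y :: v) (y :: v')) : EvenBraidEquiv M (x :: v) (x :: v') :=
    match v, v', hv, hyv with
    | [], v', _, hyv => by
      obtain rfl : v' = [] := by simpa using hyv.length_eq
      exact .refl
    | _ :: _, [], _, hyv => by simpa using hyv.length_eq
    | c :: _, c' :: _, _, hyv => by
      obtain rfl : c = c' := (hyv.fst_eq_iff_snd_eq.1 rfl).symm
      exact (of_cons_cons hyv).cons₂ x c
  rcases exists_of_cons_cons_of_transfer htransfer h with
    ⟨τ, hτ, hστ⟩ | ⟨τ, v, hτ, hxy, -⟩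
  · simp only [List.cons.injEq, true_and] at hτ
    exact hτ ▸ hστ
  · simp only [List.cons.injEq] at hτ
    exact absurd hτ.1 (ne_of_coxeterMatrix_eq_three hxy)
termination_by σ.length
decreasing_by simp only [List.length_cons] at *; omega

theorem eq_of_getElem?_odd_eq :
    ∀ {w w' : List B}, EvenBraidEquiv M w w' →
      (∀ j, w[2 * j + 1]? = w'[2 * j + 1]?) → w = w'
  | [], _, h, _ | [_], _, h, _ => (h.eq_of_length_le_one (by simp)).symm
  | _ :: _ :: _, [], h, _ | _ :: _ :: _, [_], h, _ => by simpa using h.length_eq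
  | x :: y :: σ, x' :: y' :: σ', h, hodd => by
    obtain rfl : y' = y := by simpa using (hodd 0).symm
    obtain rfl : x' = x := h.fst_eq_iff_snd_eq.2 rfl
    have hodd_tail (j : ℕ) : σ[2 * j + 1]? = σ'[2 * j + 1]? := by
      simpa [show 2 * (j + 1) + 1 = 2 * j + 1 + 1 + 1 by ring] using hodd (j + 1)
    rw [eq_of_getElem?_odd_eq h.of_cons_cons hodd_tail]

end EvenBraidEquiv

end EvenBraidMoves

theorem hasShadowAt_append_braid {s t : B} (hst : M s t = 3) (u v : List B) :
    HasShadowAt M (u ++ [s, t, s] ++ v) u.length :=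
  ⟨s, t, hst, by simp, by simp, by simp⟩

theorem evenBraidEquiv_of_braidEquiv {α γ : List B}
    (heven : ∀ i, ClassHasShadowAt M α i → Even i) (h : BraidEquiv M α γ) :
    EvenBraidEquiv M α γ := by
  induction h with
  | refl => exact .refl
  | tail hαβ hmove ih =>
    obtain ⟨u, v, s, t, hst, rfl, rfl⟩ := hmove
    exact ih.tail (.of_even_length hst v (heven _ ⟨_, hαβ, hasShadowAt_append_braid hst u v⟩))

theorem IsLink.even_of_classHasShadowAt {cs : CoxeterSystem M W} {α : List B} {r i : ℕ}
    (hα : IsLink cs α r) (h : ClassHasShadowAt M α i) : Even i := by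
  obtain ⟨j, -, rfl⟩ := (hα.2.2 i).1 h
  exact even_two_mul j

theorem statement_6_general {B W : Type*} [Group W] {M : CoxeterMatrix B}
    (cs : CoxeterSystem M W)
    (α β : List B) (r : ℕ) (hlinkα : IsLink cs α r)
    (hequiv : BraidEquiv M α β) :
    α = β ↔ ∀ j < r, α[2 * j + 1]? = β[2 * j + 1]? := by
  refine ⟨fun h _ _ => h ▸ rfl, fun hodd => ?_⟩
  have hevenEquiv :=
    evenBraidEquiv_of_braidEquiv (fun _ => hlinkα.even_of_classHasShadowAt) hequiv
  refine hevenEquiv.eq_of_getElem?_odd_eq fun j => ?_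
  rcases lt_or_ge j r with hj | hj
  · exact hodd j hj
  · have hα : α.length = 2 * r + 1 := hlinkα.2.1
    have hβ : β.length = 2 * r + 1 := hevenEquiv.length_eq.trans hα
    rw [List.getElem?_eq_none (by omega), List.getElem?_eq_none (by omega)]

/-- a link is uniquely determined within its braid class by the letters
in its even (1-based) positions `2, 4, …, 2r`, i.e. the 0-based positions `2j+1` for
`j < r`. -/
theorem statement_6 {B W : Type*} [Group W] {M : CoxeterMatrix B}
    (cs : CoxeterSystem M W) (hsl : SimplyLaced M) (htf : TriangleFree M)
    (α β : List B) (r : ℕ) (hlinkα : IsLink cs α r) (hlinkβ : IsLink cs β r)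
    (hequiv : BraidEquiv M α β) (hr : 1 ≤ r) :
    α = β ↔ ∀ j < r, α[2 * j + 1]? = β[2 * j + 1]? :=
  statement_6_general cs α β r hlinkα hequiv

end BraidFormal
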